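/- arXiv:math/0409160 — 3 statements merged into one kernel-verified Lean document; each statement's English description precedes it below -/
import Mathlib

section
/- Let φ₁,…,φ_N : U → ℂ be holomorphic functions on an open set U of a complex normed vector space E, and let ρ(z) = Σ_{k=1}^N |φ_k(z)|² be the associated euclidian rug function. Then for every z ∈ U and all vectors v, w ∈ E, the second real Fréchet derivative of ρ satisfies D²ρ(z)(v, w) + D²ρ(z)(i·v, i·w) = 4 Σ_{k=1}^N Re( (Dφ_k(z)v) · conj(Dφ_k(z)w) ). (This is the computation of the form −dd^cρ in the proof of Lemma 3.3.) -/
/-!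
Differentiating `ρ = ∑ₖ ⟪φₖ, φₖ⟫` twice gives
`D²ρ(z)(v, w) = 2 ∑ₖ (⟪φₖ, D²φₖ(v, w)⟫ + ⟪Dφₖ v, Dφₖ w⟫)`, for the real inner product on `ℂ`.
Replacing `(v, w)` by `(i v, i w)` multiplies the first term by `i² = -1`, because `D²φₖ` is
complex bilinear, and leaves the second unchanged, because multiplication by `i` is a real
isometry of `ℂ`. The first terms cancel and the second ones double.
-/

open Filter Topology ContinuousLinearMap
open scoped RealInnerProductSpace

section SumNormSq

variable {F G ι : Type*} [NormedAddCommGroup F] [NormedSpace ℝ F]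
  [NormedAddCommGroup G] [InnerProductSpace ℝ G] [Fintype ι]
  {f : ι → F → G} {f' : ι → F → F →L[ℝ] G} {ρ' : F → F →L[ℝ] ℝ} {z : F}

theorem eventuallyEq_fderiv_sum_norm_sq
    (hf : ∀ᶠ y in 𝓝 z, ∀ k, HasFDerivAt (f k) (f' k y) y)
    (hρ' : ∀ᶠ y in 𝓝 z, HasFDerivAt (fun y => ∑ k, ‖f k y‖ ^ 2) (ρ' y) y) :
    ρ' =ᶠ[𝓝 z] fun y => ∑ k, 2 • (innerSL ℝ (f k y)).comp (f' k y) := by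
  filter_upwards [hf, hρ'] with y hfy hρy
  exact hρy.unique (HasFDerivAt.fun_sum fun k _ => (hfy k).norm_sq)

/-- Here `g k v` stands for `D²(f k)(z)(v, w)`. -/
theorem second_fderiv_sum_norm_sq_apply {ρ'' : F →L[ℝ] F →L[ℝ] ℝ} {w : F} {g : ι → F →L[ℝ] G}
    (hf : ∀ᶠ y in 𝓝 z, ∀ k, HasFDerivAt (f k) (f' k y) y)
    (hρ' : ∀ᶠ y in 𝓝 z, HasFDerivAt (fun y => ∑ k, ‖f k y‖ ^ 2) (ρ' y) y)
    (hρ'' : HasFDerivAt ρ' ρ'' z) (hg : ∀ k, HasFDerivAt (fun y => f' k y w) (g k) z) (v : F) :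
    ρ'' v w = ∑ k, 2 * (⟪f k z, g k v⟫ + ⟪f' k z v, f' k z w⟫) := by
  have hρw : HasFDerivAt (fun y => ρ' y w) ((apply ℝ ℝ w).comp ρ'') z :=
    (apply ℝ ℝ w).hasFDerivAt.comp z hρ''
  have hsum : HasFDerivAt (fun y => ∑ k, 2 * ⟪f k y, f' k y w⟫)
      (∑ k, (2 : ℝ) • (fderivInnerCLM ℝ (f k z, f' k z w)).comp ((f' k z).prod (g k))) z :=
    HasFDerivAt.fun_sum fun k _ =>
      ((HasFDerivAt.inner ℝ (hf.self_of_nhds k) (hg k)).const_mul 2)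
  have hρw' : HasFDerivAt (fun y => ∑ k, 2 * ⟪f k y, f' k y w⟫) ((apply ℝ ℝ w).comp ρ'') z := by
    refine hρw.congr_of_eventuallyEq ?_
    filter_upwards [eventuallyEq_fderiv_sum_norm_sq hf hρ'] with y hy
    simp [hy]
  simpa [fderivInnerCLM_apply] using congrArg (· v) (hρw'.unique hsum)

end SumNormSq

theorem real_inner_I_mul_I_mul (a b : ℂ) : ⟪Complex.I * a, Complex.I * b⟫ = ⟪a, b⟫ := by
  simp only [Complex.inner, map_mul, Complex.conj_I]
  congr 1
  linear_combination -(b * (starRingEnd ℂ) a) * Complex.I_mul_I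

/-- Let `φ₁, …, φ_N : U → ℂ` be holomorphic functions on an open set `U` of a
complex normed vector space `E`, and let `ρ z = ∑ k, |φ k z|²` be the associated euclidian rug
function.  Then for every `z ∈ U` and all `v w : E`, the second real Fréchet derivative `ρ''` of
`ρ` at `z` satisfies
`ρ'' v w + ρ'' (i•v) (i•w) = 4 ∑ k, Re ((Dφ_k(z) v) * conj (Dφ_k(z) w))`. -/
theorem milnor_rug_second_derivative
    {E : Type*} [NormedAddCommGroup E] [NormedSpace ℂ E]
    {U : Set E} (hU : IsOpen U) {z : E} (hz : z ∈ U)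
    {N : ℕ} (φ : Fin N → E → ℂ)
    (φ' : Fin N → E → (E →L[ℂ] ℂ)) (φ'' : Fin N → E → (E →L[ℂ] E →L[ℂ] ℂ))
    (hφ : ∀ k, ∀ y ∈ U, HasFDerivAt (φ k) (φ' k y) y)
    (hφ' : ∀ k, ∀ y ∈ U, HasFDerivAt (φ' k) (φ'' k y) y)
    (ρ' : E → (E →L[ℝ] ℝ)) (ρ'' : E →L[ℝ] E →L[ℝ] ℝ)
    (hρ' : ∀ y ∈ U, HasFDerivAt (fun y => ∑ k, Complex.normSq (φ k y)) (ρ' y) y)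
    (hρ'' : HasFDerivAt ρ' ρ'' z)
    (v w : E) :
    ρ'' v w + ρ'' (Complex.I • v) (Complex.I • w)
      = 4 * ∑ k, (φ' k z v * (starRingEnd ℂ) (φ' k z w)).re := by
  have hnhds : ∀ᶠ y in 𝓝 z, y ∈ U := hU.mem_nhds hz
  have hφℝ : ∀ᶠ y in 𝓝 z, ∀ k, HasFDerivAt (φ k) ((φ' k y).restrictScalars ℝ) y := by
    filter_upwards [hnhds] with y hy k using (hφ k y hy).restrictScalars ℝ
  have hρℝ : ∀ᶠ y in 𝓝 z, HasFDerivAt (fun y => ∑ k, ‖φ k y‖ ^ 2) (ρ' y) y := by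
    filter_upwards [hnhds] with y hy
    simpa [Complex.normSq_eq_norm_sq] using hρ' y hy
  have hφ'ℝ : ∀ u k, HasFDerivAt (fun y => (φ' k y).restrictScalars ℝ u)
      (((apply ℂ ℂ u).comp (φ'' k z)).restrictScalars ℝ) z := fun u k =>
    ((apply ℂ ℂ u).hasFDerivAt.comp z (hφ' k z hz)).restrictScalars ℝ
  have hρ''_apply := fun u v => second_fderiv_sum_norm_sq_apply hφℝ hρℝ hρ'' (hφ'ℝ u) v
  simp only [hρ''_apply, ← Finset.sum_add_distrib, Finset.mul_sum]
  refine Finset.sum_congr rfl fun k _ => ?_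
  simp only [coe_restrictScalars', comp_apply, apply_apply, map_smul, smul_apply, smul_eq_mul]
  rw [← mul_assoc, Complex.I_mul_I, neg_one_mul, inner_neg_right, real_inner_I_mul_I_mul,
    real_inner_comm (φ' k z w), Complex.inner (φ' k z w)]
  ring
end

section
/- Let φ₁,…,φ_N : U → ℂ be holomorphic functions on an open set U of a complex normed vector space E, and let ρ(z) = Σ_{k=1}^N |φ_k(z)|² be the associated euclidian rug function. For z ∈ U define the Levi form L_z(v) := D²ρ(z)(v, v) + D²ρ(z)(i·v, i·v). Then L_z(v) = 4 Σ_{k=1}^N |Dφ_k(z)v|² ≥ 0 for every v ∈ E, and L_z(v) > 0 for every v ≠ 0 if and only if the ℂ-linear map E → ℂ^N, v ↦ (Dφ₁(z)v, …, Dφ_N(z)v), is injective. (Lemma 3.3: ρ is strictly pluri-subharmonic at z exactly where the map Φ = (φ₁,…,φ_N) is an immersion.) -/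
/-!
Write `⟪·, ·⟫` for the real inner product `⟪a, b⟫ = Re (conj a * b)` on `ℂ`. Differentiating
`ρ = ∑ ‖φ_k‖²` twice gives
`D²ρ(z)(v, w) = ∑ 2 (⟪Dφ_k(z) v, Dφ_k(z) w⟫ + ⟪φ_k(z), D²φ_k(z)(v, w)⟫)`.
In the Levi form the second term cancels, because `D²φ_k(z)` is `ℂ`-bilinear and hence
`D²φ_k(z)(i v, i v) = -D²φ_k(z)(v, v)`, while `|Dφ_k(z)(i v)| = |Dφ_k(z) v|`; what remains is
`4 ∑ |Dφ_k(z) v|²`, which vanishes exactly on the common kernel of the `Dφ_k(z)`.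
-/

open Complex Function Filter
open scoped RealInnerProductSpace Topology

theorem sum_normSq_pos_iff_injective {ι M F : Type*} [Fintype ι] [AddCommGroup M]
    [FunLike F M ℂ] [AddMonoidHomClass F M ℂ] (L : ι → F) :
    (∀ v, v ≠ 0 → 0 < ∑ k, normSq (L k v)) ↔ Injective fun v k => L k v := by
  change _ ↔ Injective (AddMonoidHom.pi fun k => (L k : M →+ ℂ))
  rw [injective_iff_map_eq_zero]
  refine forall_congr' fun v => ?_
  have hsum : ∑ k, normSq (L k v) = 0 ↔ (fun k => L k v) = 0 := by
    rw [Finset.sum_eq_zero_iff_of_nonneg fun k _ => normSq_nonneg _, funext_iff]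
    simp
  rw [← not_imp_not, (Finset.sum_nonneg fun k _ => normSq_nonneg _).lt_iff_ne', not_not, hsum,
    not_not]
  rfl

section Rug

variable {E : Type*} [NormedAddCommGroup E] [NormedSpace ℂ E] {ι : Type*} [Fintype ι]

theorem rug_fderiv_apply {φ : ι → E → ℂ} {φ' : ι → E →L[ℂ] ℂ} {ρ' : E →L[ℝ] ℝ} {y : E}
    (hφ : ∀ k, HasFDerivAt (φ k) (φ' k) y)
    (hρ' : HasFDerivAt (fun y => ∑ k, normSq (φ k y)) ρ' y) (w : E) :
    ρ' w = ∑ k, 2 * ⟪φ k y, φ' k w⟫ := by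
  simp only [normSq_eq_norm_sq] at hρ'
  rw [hρ'.unique (HasFDerivAt.fun_sum fun k _ => ((hφ k).restrictScalars ℝ).norm_sq)]
  simp [-Complex.inner, nsmul_eq_mul]

theorem inner_add_inner_I_smul (c : ℂ) (a : E →L[ℂ] ℂ) (b : E →L[ℂ] E →L[ℂ] ℂ) (v : E) :
    (⟪a v, a v⟫ + ⟪c, b v v⟫) + (⟪a (I • v), a (I • v)⟫ + ⟪c, b (I • v) (I • v)⟫)
      = 2 * normSq (a v) := by
  have hb : b (I • v) (I • v) = -b v v := by
    simp only [map_smul, smul_apply, smul_smul, I_mul_I, neg_one_smul]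
  rw [hb]
  simp only [inner_neg_right, real_inner_self_eq_norm_sq, map_smul, smul_eq_mul, norm_mul,
    norm_I, one_mul, normSq_eq_norm_sq]
  ring

theorem rug_second_fderiv_apply {U : Set E} {z : E} (hU : U ∈ 𝓝 z) {φ : ι → E → ℂ}
    {φ' : ι → E → E →L[ℂ] ℂ} {φ'' : ι → E →L[ℂ] E →L[ℂ] ℂ}
    (hφ : ∀ k, ∀ y ∈ U, HasFDerivAt (φ k) (φ' k y) y)
    (hφ' : ∀ k, HasFDerivAt (φ' k) (φ'' k) z)
    {ρ' : E → E →L[ℝ] ℝ} {ρ'' : E →L[ℝ] E →L[ℝ] ℝ}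
    (hρ' : ∀ y ∈ U, HasFDerivAt (fun y => ∑ k, normSq (φ k y)) (ρ' y) y)
    (hρ'' : HasFDerivAt ρ' ρ'' z) (v w : E) :
    ρ'' v w = ∑ k, 2 * (⟪φ' k z v, φ' k z w⟫ + ⟪φ k z, φ'' k v w⟫) := by
  have hρ''w : HasFDerivAt (fun y => ρ' y w) ((ContinuousLinearMap.apply ℝ ℝ w).comp ρ'') z :=
    (ContinuousLinearMap.apply ℝ ℝ w).hasFDerivAt.comp z hρ''
  have heq : (fun y => ρ' y w) =ᶠ[𝓝 z] fun y => ∑ k, 2 * ⟪φ k y, φ' k y w⟫ := by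
    filter_upwards [hU] with y hy
    exact rug_fderiv_apply (fun k => hφ k y hy) (hρ' y hy) w
  have hsum := HasFDerivAt.fun_sum (u := Finset.univ) fun k _ =>
    (((hφ k z (mem_of_mem_nhds hU)).restrictScalars ℝ).inner ℝ
      (((hφ' k).clm_apply (hasFDerivAt_const w z)).restrictScalars ℝ)).const_mul 2
  have := congrArg (· v) ((hρ''w.congr_of_eventuallyEq heq.symm).unique hsum)
  simpa [fderivInnerCLM_apply, add_comm, -Complex.inner] using this

theorem rug_levi_form {U : Set E} {z : E} (hU : U ∈ 𝓝 z) {φ : ι → E → ℂ}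
    {φ' : ι → E → E →L[ℂ] ℂ} {φ'' : ι → E →L[ℂ] E →L[ℂ] ℂ}
    (hφ : ∀ k, ∀ y ∈ U, HasFDerivAt (φ k) (φ' k y) y)
    (hφ' : ∀ k, HasFDerivAt (φ' k) (φ'' k) z)
    {ρ' : E → E →L[ℝ] ℝ} {ρ'' : E →L[ℝ] E →L[ℝ] ℝ}
    (hρ' : ∀ y ∈ U, HasFDerivAt (fun y => ∑ k, normSq (φ k y)) (ρ' y) y)
    (hρ'' : HasFDerivAt ρ' ρ'' z) (v : E) :
    ρ'' v v + ρ'' (I • v) (I • v) = 4 * ∑ k, normSq (φ' k z v) := by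
  simp only [rug_second_fderiv_apply hU hφ hφ' hρ' hρ'', ← Finset.sum_add_distrib,
    Finset.mul_sum, ← mul_add, inner_add_inner_I_smul]
  ring_nf

end Rug

/-- (Lemma 3.3.)  For the euclidian rug function `ρ z = ∑ k, |φ k z|²`
associated with holomorphic functions `φ₁, …, φ_N` on an open set `U` of a complex normed
space, the Levi form `L_z(v) := D²ρ(z)(v,v) + D²ρ(z)(i•v, i•v)` satisfies
`L_z(v) = 4 ∑ k, |Dφ_k(z) v|² ≥ 0`, and `L_z(v) > 0` for every `v ≠ 0` if and only if the
ℂ-linear map `v ↦ (Dφ₁(z) v, …, Dφ_N(z) v)` is injective. -/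
theorem milnor_rug_spsh_iff_immersion
    {E : Type*} [NormedAddCommGroup E] [NormedSpace ℂ E]
    {U : Set E} (hU : IsOpen U) {z : E} (hz : z ∈ U)
    {N : ℕ} (φ : Fin N → E → ℂ)
    (φ' : Fin N → E → (E →L[ℂ] ℂ)) (φ'' : Fin N → E → (E →L[ℂ] E →L[ℂ] ℂ))
    (hφ : ∀ k, ∀ y ∈ U, HasFDerivAt (φ k) (φ' k y) y)
    (hφ' : ∀ k, ∀ y ∈ U, HasFDerivAt (φ' k) (φ'' k y) y)
    (ρ' : E → (E →L[ℝ] ℝ)) (ρ'' : E →L[ℝ] E →L[ℝ] ℝ)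
    (hρ' : ∀ y ∈ U, HasFDerivAt (fun y => ∑ k, Complex.normSq (φ k y)) (ρ' y) y)
    (hρ'' : HasFDerivAt ρ' ρ'' z) :
    (∀ v : E,
        ρ'' v v + ρ'' (Complex.I • v) (Complex.I • v)
          = 4 * ∑ k, Complex.normSq (φ' k z v) ∧
        0 ≤ ρ'' v v + ρ'' (Complex.I • v) (Complex.I • v)) ∧
    ((∀ v : E, v ≠ 0 → 0 < ρ'' v v + ρ'' (Complex.I • v) (Complex.I • v)) ↔
      Function.Injective (fun v : E => (fun k : Fin N => φ' k z v))) := by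
  have levi := rug_levi_form (hU.mem_nhds hz) hφ (fun k => hφ' k z hz) hρ' hρ''
  refine ⟨fun v => ⟨levi v, ?_⟩, ?_⟩
  · rw [levi v]
    exact mul_nonneg zero_le_four (Finset.sum_nonneg fun k _ => normSq_nonneg _)
  simp only [levi, mul_pos_iff_of_pos_left (four_pos : (0 : ℝ) < 4)]
  exact sum_normSq_pos_iff_injective fun k => φ' k z
end

section
/- Let E be a complex inner product space with inner product ⟪·,·⟫ (conjugate-linear in the first variable), U ⊆ E open, and φ : U → ℂ complex differentiable at z ∈ U with φ(z) ∈ ℂ ∖ ℝ_{≤0}. Suppose g ∈ E is the hermitian gradient of φ at z, i.e. Dφ(z)v = ⟪g, v⟫ for all v ∈ E. Then the vector (i / conj(φ(z)))·g is the gradient of arg∘φ at z with respect to the real inner product Re⟪·,·⟫: for every v ∈ E, the real Fréchet derivative of z ↦ arg(φ(z)) at z applied to v equals Re⟪(i / conj(φ(z)))·g, v⟫. (Lemma 3.9, part 2: ∇ arg φ = i·∇φ / conj(φ).) -/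
open Complex

-- `arg = Im ∘ log` on the slit plane.
theorem HasFDerivAt.arg {E : Type*} [NormedAddCommGroup E] [NormedSpace ℂ E]
    {φ : E → ℂ} {φ' : E →L[ℂ] ℂ} {z : E} (hφ : HasFDerivAt φ φ' z)
    (hslit : φ z ∈ slitPlane) :
    HasFDerivAt (fun y => (φ y).arg) (imCLM.comp (((φ z)⁻¹ • φ').restrictScalars ℝ)) z := by
  simpa only [Function.comp_def, imCLM_apply, log_im] using
    imCLM.hasFDerivAt.comp z ((hφ.clog hslit).restrictScalars ℝ)

theorem Complex.re_conj_I_div_conj_mul (w a : ℂ) :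
    (starRingEnd ℂ (I / starRingEnd ℂ w) * a).re = (w⁻¹ * a).im := by
  rw [map_div₀, conj_I, conj_conj, neg_div, div_eq_mul_inv, neg_mul, mul_assoc, neg_re,
    I_mul_re, neg_neg]

theorem gradient_arg_comp_general
    {E : Type*} [NormedAddCommGroup E] [InnerProductSpace ℂ E]
    {z : E}
    {φ : E → ℂ} {φ' : E →L[ℂ] ℂ} (hφ : HasFDerivAt φ φ' z)
    (hslit : φ z ∈ Complex.slitPlane)
    (g : E) (hg : ∀ v : E, φ' v = (inner ℂ g v : ℂ)) :
    DifferentiableAt ℝ (fun y => (φ y).arg) z ∧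
    ∀ v : E, fderiv ℝ (fun y => (φ y).arg) z v
        = (inner ℂ ((Complex.I / (starRingEnd ℂ) (φ z)) • g) v : ℂ).re := by
  have harg := hφ.arg hslit
  refine ⟨harg.differentiableAt, fun v => ?_⟩
  rw [harg.fderiv, inner_smul_left, re_conj_I_div_conj_mul, ← hg]
  rfl

/-- (Lemma 3.9, part 2: `∇ arg φ = i ∇φ / conj φ`.)  Let `E` be a complex
inner product space, `U ⊆ E` open, `φ : U → ℂ` complex differentiable at `z ∈ U` with
`φ z` in the slit plane, and let `g` be the hermitian gradient of `φ` at `z`.  Then the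
vector `(i / conj (φ z)) • g` is the gradient of `arg ∘ φ` at `z` with respect to the real
inner product `Re ⟪·,·⟫`. -/
theorem gradient_arg_comp
    {E : Type*} [NormedAddCommGroup E] [InnerProductSpace ℂ E]
    {U : Set E} (hU : IsOpen U) {z : E} (hz : z ∈ U)
    {φ : E → ℂ} {φ' : E →L[ℂ] ℂ} (hφ : HasFDerivAt φ φ' z)
    (hslit : φ z ∈ Complex.slitPlane)
    (g : E) (hg : ∀ v : E, φ' v = (inner ℂ g v : ℂ)) :
    DifferentiableAt ℝ (fun y => (φ y).arg) z ∧
    ∀ v : E, fderiv ℝ (fun y => (φ y).arg) z v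
        = (inner ℂ ((Complex.I / (starRingEnd ℂ) (φ z)) • g) v : ℂ).re :=
  gradient_arg_comp_general hφ hslit g hg
end
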